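/- For all θ ≤ 0 and n ≥ 1, the Stern–Brocot sums satisfy (f_{n+1} f_{n+2})^{-θ} ≤ ∑_{k=1}^{2^n} |T_{n,k}|^θ ≤ 2^n (f_{n+1} f_{n+2})^{-θ} ≤ 2^n γ^{-2θ(n+2)}; consequently −2θ log γ ≤ P(θ) ≤ log 2 − 2θ log γ for θ ≤ 0, where P is the Stern–Brocot pressure defined with limsup. -/

import Mathlib

open Filter

/-- Stern–Brocot numerators. -/
def sbS : ℕ → ℕ → ℕ
  | 0, k => if k ≤ 1 then 0 else 1
  | n + 1, k =>
    if k % 2 = 1 then sbS n ((k + 1) / 2) else sbS n (k / 2) + sbS n (k / 2 + 1)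

/-- Stern–Brocot denominators. -/
def sbT : ℕ → ℕ → ℕ
  | 0, _ => 1
  | n + 1, k =>
    if k % 2 = 1 then sbT n ((k + 1) / 2) else sbT n (k / 2) + sbT n (k / 2 + 1)

/-- The length of the Stern–Brocot interval `T_{n,k}`. -/
noncomputable def sbLen (n k : ℕ) : ℝ :=
  (sbS n (k + 1) : ℝ) / sbT n (k + 1) - (sbS n k : ℝ) / sbT n k

/-- The Stern–Brocot pressure (with `limsup`). -/
noncomputable def sbPressure (θ : ℝ) : ℝ :=
  limsup (fun n : ℕ =>
    Real.log (∑ k ∈ Finset.Icc 1 (2 ^ n), sbLen n k ^ θ) / n) atTop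

open Real Topology goldenRatio

/-!
Consecutive Stern–Brocot fractions `p/q < p'/q'` of order `n` satisfy `p'q - pq' = 1`, so
`|T_{n,k}| = 1/(t_{n,k} t_{n,k+1})`. Passing to order `n+1` replaces an adjacent pair
`(a, b)` of denominators by `(a, a+b)` and `(a+b, b)`; inductively the larger of two adjacent
denominators is at most `f_{n+2}` and the smaller at most `f_{n+1}`, and the pair
`{f_{n+1}, f_{n+2}}` does occur. Hence each of the `2^n` terms `|T_{n,k}|^θ` (θ ≤ 0) is at most
`(f_{n+1} f_{n+2})^{-θ}`, one of them equals it, and `f_{n+1} f_{n+2} = γ^{2n + O(1)}` gives the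
bounds on the pressure.
-/

theorem le_limsup_and_limsup_le_of_tendsto {ι : Type*} {l : Filter ι} [l.NeBot]
    {u a b : ι → ℝ} {A B : ℝ} (ha : Tendsto a l (𝓝 A)) (hb : Tendsto b l (𝓝 B))
    (hau : a ≤ᶠ[l] u) (hub : u ≤ᶠ[l] b) :
    A ≤ limsup u l ∧ limsup u l ≤ B := by
  have hu_bdd : IsBoundedUnder (· ≤ ·) l u := hb.isBoundedUnder_le.mono_le hub
  have hu_cobdd : IsCoboundedUnder (· ≤ ·) l u :=
    (ha.isBoundedUnder_ge.mono_ge hau).isCoboundedUnder_le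
  constructor
  · rw [← ha.limsup_eq]
    exact limsup_le_limsup hau ha.isCoboundedUnder_le hu_bdd
  · rw [← hb.limsup_eq]
    exact limsup_le_limsup hub hu_cobdd hb.isBoundedUnder_le

theorem le_limsup_div_and_limsup_div_le {u : ℕ → ℝ} {c d α β : ℝ}
    (hlo : ∀ n : ℕ, c * n + α ≤ u n) (hhi : ∀ n : ℕ, u n ≤ d * n + β) :
    c ≤ limsup (fun n : ℕ => u n / n) atTop ∧
      limsup (fun n : ℕ => u n / n) atTop ≤ d := by
  have tendsto_add_div (e r : ℝ) : Tendsto (fun n : ℕ => e + r / n) atTop (𝓝 e) := by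
    simpa using tendsto_const_nhds.add (tendsto_const_div_atTop_nhds_zero_nat r)
  refine le_limsup_and_limsup_le_of_tendsto (tendsto_add_div c α) (tendsto_add_div d β) ?_ ?_
  · filter_upwards [eventually_gt_atTop 0] with n hn
    rw [le_div_iff₀ (by positivity), add_mul, div_mul_cancel₀ _ (by positivity)]
    exact hlo n
  · filter_upwards [eventually_gt_atTop 0] with n hn
    rw [div_le_iff₀ (by positivity), add_mul, div_mul_cancel₀ _ (by positivity)]
    exact hhi n

section GoldenRatio

theorem fib_succ_le_goldenRatio_pow (n : ℕ) : (Nat.fib (n + 1) : ℝ) ≤ φ ^ n := by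
  have h := goldenRatio_mul_fib_succ_add_fib n
  have : φ * Nat.fib (n + 1) ≤ φ * φ ^ n := by
    rw [← pow_succ']; linarith [(Nat.fib n).cast_nonneg (α := ℝ)]
  exact le_of_mul_le_mul_left this goldenRatio_pos

theorem goldenRatio_pow_le_mul_fib_succ (n : ℕ) : φ ^ n ≤ φ * Nat.fib (n + 1) := by
  -- `φ ^ n = F (n + 1) + (φ - 1) F n` and `F n ≤ F (n + 1)`
  have h := fib_succ_sub_goldenConj_mul_fib n
  have hmono : (Nat.fib n : ℝ) ≤ Nat.fib (n + 1) := by exact_mod_cast Nat.fib_le_fib_succ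
  rw [← one_sub_goldenConj] at h
  nlinarith [one_lt_goldenRatio]

theorem fib_mul_fib_pos (n : ℕ) : 0 < (Nat.fib (n + 1) : ℝ) * Nat.fib (n + 2) := by
  have := Nat.fib_pos.mpr (Nat.succ_pos n)
  have := Nat.fib_pos.mpr (Nat.succ_pos (n + 1))
  positivity

theorem fib_mul_fib_le_goldenRatio_pow (n : ℕ) :
    (Nat.fib (n + 1) : ℝ) * Nat.fib (n + 2) ≤ φ ^ (2 * n + 1) := by
  rw [show 2 * n + 1 = n + (n + 1) by ring, pow_add]
  exact mul_le_mul (fib_succ_le_goldenRatio_pow n) (fib_succ_le_goldenRatio_pow (n + 1))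
    (by positivity) (by positivity)

theorem goldenRatio_pow_le_sq_mul_fib_mul_fib (n : ℕ) :
    φ ^ (2 * n + 1) ≤ φ ^ 2 * ((Nat.fib (n + 1) : ℝ) * Nat.fib (n + 2)) := by
  calc φ ^ (2 * n + 1) = φ ^ n * φ ^ (n + 1) := by ring
    _ ≤ (φ * Nat.fib (n + 1)) * (φ * Nat.fib (n + 2)) :=
      mul_le_mul (goldenRatio_pow_le_mul_fib_succ n) (goldenRatio_pow_le_mul_fib_succ (n + 1))
        (by positivity) (by positivity)
    _ = _ := by ring

end GoldenRatio

section SternBrocot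

theorem sbS_succ_odd (n m : ℕ) : sbS (n + 1) (2 * m + 1) = sbS n (m + 1) := by
  rw [sbS, if_pos (by omega)]; congr 1; omega

theorem sbS_succ_even (n m : ℕ) : sbS (n + 1) (2 * m) = sbS n m + sbS n (m + 1) := by
  rw [sbS, if_neg (by omega)]; congr 2 <;> omega

theorem sbT_succ_odd (n m : ℕ) : sbT (n + 1) (2 * m + 1) = sbT n (m + 1) := by
  rw [sbT, if_pos (by omega)]; congr 1; omega

theorem sbT_succ_even (n m : ℕ) : sbT (n + 1) (2 * m) = sbT n m + sbT n (m + 1) := by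
  rw [sbT, if_neg (by omega)]; congr 2 <;> omega

theorem sbT_pos (n k : ℕ) : 0 < sbT n k := by
  induction n generalizing k with
  | zero => simp [sbT]
  | succ n ih =>
    rw [sbT]
    split
    · exact ih _
    · exact Nat.add_pos_left (ih _) _

def sbFrac (n k : ℕ) : ℕ × ℕ := (sbS n k, sbT n k)

theorem sbFrac_succ_odd (n m : ℕ) : sbFrac (n + 1) (2 * m + 1) = sbFrac n (m + 1) := by
  simp only [sbFrac, sbS_succ_odd, sbT_succ_odd]

theorem sbFrac_succ_even (n m : ℕ) :
    sbFrac (n + 1) (2 * m) = sbFrac n m + sbFrac n (m + 1) := by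
  simp only [sbFrac, sbS_succ_even, sbT_succ_even, Prod.mk_add_mk]

/-- Mediant insertion: adjacent fractions `p, q` of order `n` become the adjacent pairs
`p, p + q` and `p + q, q` of order `n + 1`. -/
theorem sbFrac_adjacent_induction (P : ℕ → ℕ × ℕ → ℕ × ℕ → Prop)
    (zero : P 0 (0, 1) (1, 1))
    (succ : ∀ n p q, P n p q → P (n + 1) p (p + q) ∧ P (n + 1) (p + q) q) :
    ∀ n k, 1 ≤ k → k ≤ 2 ^ n → P n (sbFrac n k) (sbFrac n (k + 1)) := by
  intro n
  induction n with
  | zero =>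
    intro k h1 h2
    obtain rfl : k = 1 := by simp at h2; omega
    exact zero
  | succ n ih =>
    intro k h1 h2
    rw [pow_succ] at h2
    obtain ⟨j, rfl | rfl⟩ : ∃ j, k = 2 * j + 1 ∨ k = 2 * (j + 1) :=
      ⟨(k - 1) / 2, by omega⟩
    · have h := (succ n _ _ (ih (j + 1) (by omega) (by omega))).1
      rwa [sbFrac_succ_odd, show 2 * j + 1 + 1 = 2 * (j + 1) by ring, sbFrac_succ_even]
    · have h := (succ n _ _ (ih (j + 1) (by omega) (by omega))).2
      rwa [sbFrac_succ_even, sbFrac_succ_odd]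

theorem sbS_mul_sbT_sub_sbS_mul_sbT_eq_one (n k : ℕ) (h1 : 1 ≤ k) (h2 : k ≤ 2 ^ n) :
    (sbS n (k + 1) : ℤ) * sbT n k - sbS n k * sbT n (k + 1) = 1 :=
  sbFrac_adjacent_induction (fun _ p q => (q.1 : ℤ) * p.2 - p.1 * q.2 = 1) (by norm_num)
    (fun _ p q h => by
      simp only [Prod.fst_add, Prod.snd_add, Nat.cast_add]
      constructor <;> linear_combination h) n k h1 h2

theorem sbT_adjacent_le_fib (n k : ℕ) (h1 : 1 ≤ k) (h2 : k ≤ 2 ^ n) :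
    max (sbT n k) (sbT n (k + 1)) ≤ Nat.fib (n + 2) ∧
      min (sbT n k) (sbT n (k + 1)) ≤ Nat.fib (n + 1) :=
  sbFrac_adjacent_induction
    (fun n p q => max p.2 q.2 ≤ Nat.fib (n + 2) ∧ min p.2 q.2 ≤ Nat.fib (n + 1)) (by simp)
    (fun n p q h => by
      have hrec : Nat.fib (n + 1 + 2) = Nat.fib (n + 1) + Nat.fib (n + 2) := Nat.fib_add_two
      have hmono : Nat.fib (n + 1) ≤ Nat.fib (n + 2) := Nat.fib_le_fib_succ
      have hidx : Nat.fib (n + 1 + 1) = Nat.fib (n + 2) := rfl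
      simp only [Prod.snd_add]
      omega) n k h1 h2

theorem sbT_mul_sbT_succ_le (n k : ℕ) (h1 : 1 ≤ k) (h2 : k ≤ 2 ^ n) :
    sbT n k * sbT n (k + 1) ≤ Nat.fib (n + 1) * Nat.fib (n + 2) := by
  obtain ⟨hmax, hmin⟩ := sbT_adjacent_le_fib n k h1 h2
  rw [← min_mul_max]
  exact Nat.mul_le_mul hmin hmax

/-- The Fibonacci pair sits on the zigzag path of the Stern–Brocot tree, so its orientation
alternates with the order. -/
theorem exists_sbT_adjacent_eq_fib (n : ℕ) : ∃ k, 1 ≤ k ∧ k ≤ 2 ^ n ∧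
    ((sbT n k = Nat.fib (n + 1) ∧ sbT n (k + 1) = Nat.fib (n + 2)) ∨
      (sbT n k = Nat.fib (n + 2) ∧ sbT n (k + 1) = Nat.fib (n + 1))) := by
  induction n with
  | zero => exact ⟨1, le_rfl, le_rfl, Or.inl ⟨rfl, rfl⟩⟩
  | succ n ih =>
    have hrec : Nat.fib (n + 1 + 2) = Nat.fib (n + 1) + Nat.fib (n + 2) := Nat.fib_add_two
    have hidx : Nat.fib (n + 1 + 1) = Nat.fib (n + 2) := rfl
    obtain ⟨k, hk1, hk2, ⟨hl, hr⟩ | ⟨hl, hr⟩⟩ := ih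
    · refine ⟨2 * k, by omega, by rw [pow_succ]; omega, Or.inr ⟨?_, ?_⟩⟩
      · rw [sbT_succ_even]; omega
      · rw [sbT_succ_odd]; omega
    · obtain ⟨j, rfl⟩ : ∃ j, k = j + 1 := ⟨k - 1, by omega⟩
      refine ⟨2 * j + 1, by omega, by rw [pow_succ]; omega, Or.inl ⟨?_, ?_⟩⟩
      · rw [sbT_succ_odd]; omega
      · rw [show 2 * j + 1 + 1 = 2 * (j + 1) by ring, sbT_succ_even]; omega

theorem exists_sbT_mul_sbT_succ_eq_fib (n : ℕ) : ∃ k, 1 ≤ k ∧ k ≤ 2 ^ n ∧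
    sbT n k * sbT n (k + 1) = Nat.fib (n + 1) * Nat.fib (n + 2) := by
  obtain ⟨k, hk1, hk2, ⟨hl, hr⟩ | ⟨hl, hr⟩⟩ := exists_sbT_adjacent_eq_fib n
  · exact ⟨k, hk1, hk2, by rw [hl, hr]⟩
  · exact ⟨k, hk1, hk2, by rw [hl, hr, Nat.mul_comm]⟩

theorem sbLen_eq_inv (n k : ℕ) (h1 : 1 ≤ k) (h2 : k ≤ 2 ^ n) :
    sbLen n k = ((sbT n k : ℝ) * sbT n (k + 1))⁻¹ := by
  have ht : (sbT n k : ℝ) ≠ 0 := by exact_mod_cast (sbT_pos n k).ne'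
  have ht' : (sbT n (k + 1) : ℝ) ≠ 0 := by exact_mod_cast (sbT_pos n (k + 1)).ne'
  have hdet : (sbS n (k + 1) : ℝ) * sbT n k - sbS n k * sbT n (k + 1) = 1 := by
    exact_mod_cast sbS_mul_sbT_sub_sbS_mul_sbT_eq_one n k h1 h2
  rw [sbLen, div_sub_div _ _ ht' ht, mul_comm (sbT n (k + 1) : ℝ), hdet, one_div, mul_comm]

theorem sbLen_rpow (θ : ℝ) (n k : ℕ) (h1 : 1 ≤ k) (h2 : k ≤ 2 ^ n) :
    sbLen n k ^ θ = ((sbT n k : ℝ) * sbT n (k + 1)) ^ (-θ) := by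
  rw [sbLen_eq_inv n k h1 h2, inv_rpow (by positivity), rpow_neg (by positivity)]

noncomputable def sbPartitionSum (θ : ℝ) (n : ℕ) : ℝ :=
  ∑ k ∈ Finset.Icc 1 (2 ^ n), sbLen n k ^ θ

theorem fib_mul_fib_rpow_le_sbPartitionSum (θ : ℝ) (n : ℕ) :
    ((Nat.fib (n + 1) : ℝ) * Nat.fib (n + 2)) ^ (-θ) ≤ sbPartitionSum θ n := by
  obtain ⟨k, hk1, hk2, hk⟩ := exists_sbT_mul_sbT_succ_eq_fib n
  have hterm : sbLen n k ^ θ = ((Nat.fib (n + 1) : ℝ) * Nat.fib (n + 2)) ^ (-θ) := by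
    rw [sbLen_rpow θ n k hk1 hk2]
    exact_mod_cast congrArg (fun m : ℕ => (m : ℝ) ^ (-θ)) hk
  rw [sbPartitionSum, ← hterm]
  refine Finset.single_le_sum (f := fun i => sbLen n i ^ θ) (fun i hi => ?_)
    (Finset.mem_Icc.mpr ⟨hk1, hk2⟩)
  obtain ⟨hi1, hi2⟩ := Finset.mem_Icc.mp hi
  rw [sbLen_rpow θ n i hi1 hi2]
  positivity

theorem sbPartitionSum_le (θ : ℝ) (hθ : θ ≤ 0) (n : ℕ) :
    sbPartitionSum θ n ≤ 2 ^ n * ((Nat.fib (n + 1) : ℝ) * Nat.fib (n + 2)) ^ (-θ) := by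
  calc sbPartitionSum θ n
      ≤ ∑ _k ∈ Finset.Icc 1 (2 ^ n), ((Nat.fib (n + 1) : ℝ) * Nat.fib (n + 2)) ^ (-θ) := by
        refine Finset.sum_le_sum fun i hi => ?_
        obtain ⟨hi1, hi2⟩ := Finset.mem_Icc.mp hi
        rw [sbLen_rpow θ n i hi1 hi2]
        exact rpow_le_rpow (by positivity) (by exact_mod_cast sbT_mul_sbT_succ_le n i hi1 hi2)
          (neg_nonneg.mpr hθ)
    _ = 2 ^ n * ((Nat.fib (n + 1) : ℝ) * Nat.fib (n + 2)) ^ (-θ) := by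
        rw [Finset.sum_const, Nat.card_Icc, Nat.add_sub_cancel, nsmul_eq_mul]
        push_cast
        rfl

theorem fib_mul_fib_rpow_le_goldenRatio_rpow (θ : ℝ) (hθ : θ ≤ 0) (n : ℕ) :
    ((Nat.fib (n + 1) : ℝ) * Nat.fib (n + 2)) ^ (-θ) ≤ φ ^ (-2 * θ * ((n : ℝ) + 2)) :=
  calc ((Nat.fib (n + 1) : ℝ) * Nat.fib (n + 2)) ^ (-θ)
      ≤ (φ ^ (2 * n + 1)) ^ (-θ) :=
        rpow_le_rpow (by positivity) (fib_mul_fib_le_goldenRatio_pow n) (neg_nonneg.mpr hθ)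
    _ = φ ^ ((2 * n + 1) * -θ) := by
        rw [← rpow_natCast, ← rpow_mul goldenRatio_pos.le]; push_cast; ring_nf
    _ ≤ φ ^ (-2 * θ * ((n : ℝ) + 2)) :=
        rpow_le_rpow_of_exponent_le one_lt_goldenRatio.le (by nlinarith)

theorem le_log_sbPartitionSum (θ : ℝ) (hθ : θ ≤ 0) (n : ℕ) :
    -2 * θ * log φ * n + θ * log φ ≤ log (sbPartitionSum θ n) := by
  have hF := fib_mul_fib_pos n
  have hlogF :
      (2 * n + 1) * log φ ≤ 2 * log φ + log ((Nat.fib (n + 1) : ℝ) * Nat.fib (n + 2)) := by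
    have := log_le_log (by positivity) (goldenRatio_pow_le_sq_mul_fib_mul_fib n)
    rw [log_mul (by positivity) hF.ne', log_pow, log_pow] at this
    exact_mod_cast this
  have hsum := log_le_log (by positivity) (fib_mul_fib_rpow_le_sbPartitionSum θ n)
  rw [log_rpow hF] at hsum
  linarith [mul_le_mul_of_nonneg_left hlogF (neg_nonneg.mpr hθ)]

theorem log_sbPartitionSum_le (θ : ℝ) (hθ : θ ≤ 0) (n : ℕ) :
    log (sbPartitionSum θ n) ≤ (log 2 - 2 * θ * log φ) * n + -4 * θ * log φ := by
  have hpos : 0 < sbPartitionSum θ n :=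
    (rpow_pos_of_pos (fib_mul_fib_pos n) _).trans_le (fib_mul_fib_rpow_le_sbPartitionSum θ n)
  have h := log_le_log hpos ((sbPartitionSum_le θ hθ n).trans
    (mul_le_mul_of_nonneg_left (fib_mul_fib_rpow_le_goldenRatio_rpow θ hθ n) (by positivity)))
  rw [log_mul (by positivity) (by positivity), log_pow, log_rpow goldenRatio_pos] at h
  linarith

end SternBrocot

/-- For `θ ≤ 0` and `n ≥ 1`:
`(f_{n+1} f_{n+2})^{-θ} ≤ ∑_k |T_{n,k}|^θ ≤ 2^n (f_{n+1} f_{n+2})^{-θ}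
  ≤ 2^n γ^{-2θ(n+2)}`, and consequently
`-2θ log γ ≤ P(θ) ≤ log 2 - 2θ log γ`. -/
theorem sternBrocot_pressure_bounds (θ : ℝ) (hθ : θ ≤ 0) :
    (∀ n : ℕ, 1 ≤ n →
      ((Nat.fib (n + 1) : ℝ) * Nat.fib (n + 2)) ^ (-θ) ≤
        (∑ k ∈ Finset.Icc 1 (2 ^ n), sbLen n k ^ θ) ∧
      (∑ k ∈ Finset.Icc 1 (2 ^ n), sbLen n k ^ θ) ≤
        2 ^ n * ((Nat.fib (n + 1) : ℝ) * Nat.fib (n + 2)) ^ (-θ) ∧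
      2 ^ n * ((Nat.fib (n + 1) : ℝ) * Nat.fib (n + 2)) ^ (-θ) ≤
        2 ^ n * ((1 + Real.sqrt 5) / 2) ^ (-2 * θ * ((n : ℝ) + 2))) ∧
    -2 * θ * Real.log ((1 + Real.sqrt 5) / 2) ≤ sbPressure θ ∧
    sbPressure θ ≤ Real.log 2 - 2 * θ * Real.log ((1 + Real.sqrt 5) / 2) :=
  ⟨fun n _ => ⟨fib_mul_fib_rpow_le_sbPartitionSum θ n, sbPartitionSum_le θ hθ n,
      mul_le_mul_of_nonneg_left (fib_mul_fib_rpow_le_goldenRatio_rpow θ hθ n) (by positivity)⟩,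
    le_limsup_div_and_limsup_div_le (le_log_sbPartitionSum θ hθ) (log_sbPartitionSum_le θ hθ)⟩
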